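/- arXiv:1308.6172 — 8 statements merged into one kernel-verified Lean document; each statement's English description precedes it below -/
import Mathlib

section
/- Let G be a po-group (written multiplicatively) with positive cone G⁺ and negative cone G⁻, let I be a set and λ, ρ : I → I bijections. Then the structure K with universe the disjoint union (G⁺)^I ⊎ (G⁻)^I, with 0 the constant sequence e in (G⁺)^I, 1 the constant sequence e⁻¹ in (G⁻)^I, and partial operation + defined by: (I) ⟨aᵢ⁻¹⟩ + ⟨bᵢ⁻¹⟩ undefined; (II) ⟨aᵢ⁻¹⟩ + ⟨fⱼ⟩ := ⟨aᵢ⁻¹ f_{ρ⁻¹(i)}⟩ whenever f_{ρ⁻¹(i)} ≤ aᵢ for all i; (III) ⟨fⱼ⟩ + ⟨aᵢ⁻¹⟩ := ⟨f_{λ⁻¹(i)} aᵢ⁻¹⟩ whenever f_{λ⁻¹(i)} ≤ aᵢ for all i; (IV) ⟨fⱼ⟩ + ⟨gⱼ⟩ := ⟨fⱼ gⱼ⟩ always; is a pseudo effect algebra. -/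
/-! An upper element is stored as its tuple of values in `G⁻`. A sum with exactly one upper
summand is a (λ- or ρ-twisted) coordinatewise product, defined exactly when that product lies
in `G⁻` (`Kite.neg?`). Since lower summands are `≥ e`, an iterated sum is defined iff its final
product lies in `G⁻`, so associativity reduces to associativity in `G`. Complements are
coordinatewise inverses, and the witnesses of the exchange axiom are conjugates, which stay in
the same cone. -/

/-- A pseudo effect algebra: a partial algebra `(E; +, 0, 1)` where the partial
operation is modeled as `add : E → E → Option E` (`none` = undefined). -/
structure PseudoEffectAlgebra (E : Type*) where
  add : E → E → Option E
  zero : E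
  one : E
  /-- (i): `a+b` and `(a+b)+c` exist iff `b+c` and `a+(b+c)` exist, and then they are equal. -/
  assoc : ∀ a b c : E, (add a b).bind (fun x => add x c) = (add b c).bind (fun x => add a x)
  /-- (ii): there is exactly one `d` with `a + d = 1`. -/
  rcompl : ∀ a : E, ∃! d, add a d = some one
  /-- (ii): there is exactly one `e` with `e + a = 1`. -/
  lcompl : ∀ a : E, ∃! e', add e' a = some one
  /-- (iii): if `a+b` exists, then `a+b = d+a = b+e` for some `d, e`. -/
  exch : ∀ a b s : E, add a b = some s → (∃ d, add d a = some s) ∧ (∃ e', add b e' = some s)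
  /-- (iv): if `1+a` exists then `a = 0`. -/
  one_add : ∀ a : E, (add one a).isSome → a = zero
  /-- (iv): if `a+1` exists then `a = 0`. -/
  add_one : ∀ a : E, (add a one).isSome → a = zero

open Classical in
/-- The universe of the kite: the disjoint union `(G⁺)^I ⊎ (G⁻)^I`. -/
def Kite (G : Type*) [Group G] [PartialOrder G] (I : Type*) : Type _ :=
  (I → {g : G // 1 ≤ g}) ⊕ (I → {g : G // g ≤ 1})

open Classical in
/-- The kite partial addition (rules (I)–(IV)); elements of the upper part `(G⁻)^I`
are the tuples `⟨aᵢ⁻¹ : i ∈ I⟩`, stored via their values `aᵢ⁻¹ ∈ G⁻`. -/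
noncomputable def kiteAdd {G : Type*} [Group G] [PartialOrder G]
    [CovariantClass G G (· * ·) (· ≤ ·)]
    [CovariantClass G G (Function.swap (· * ·)) (· ≤ ·)]
    {I : Type*} (l r : Equiv.Perm I) :
    Kite G I → Kite G I → Option (Kite G I)
  | Sum.inr _, Sum.inr _ => none                                      -- rule (I)
  | Sum.inr a, Sum.inl f =>                                           -- rule (II)
      if h : ∀ i, (f (r.symm i) : G) ≤ ((a i : G))⁻¹ then
        some (Sum.inr (fun i => ⟨(a i : G) * (f (r.symm i) : G), by
          have := CovariantClass.elim (μ := fun x y : G => x * y) (r := fun x y : G => x ≤ y) (a i : G) (h i)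
          simpa using this⟩))
      else none
  | Sum.inl f, Sum.inr a =>                                           -- rule (III)
      if h : ∀ i, (f (l.symm i) : G) ≤ ((a i : G))⁻¹ then
        some (Sum.inr (fun i => ⟨(f (l.symm i) : G) * (a i : G), by
          have := CovariantClass.elim (μ := Function.swap fun x y : G => x * y) (r := fun x y : G => x ≤ y) (a i : G) (h i)
          simpa [Function.swap] using this⟩))
      else none
  | Sum.inl f, Sum.inl g =>                                           -- rule (IV)
      some (Sum.inl (fun j => ⟨(f j : G) * (g j : G), one_le_mul (f j).2 (g j).2⟩))

section PoGroup

variable {G : Type*} [Group G] [PartialOrder G] [CovariantClass G G (· * ·) (· ≤ ·)]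
    [CovariantClass G G (Function.swap (· * ·)) (· ≤ ·)]

lemma one_le_mul_mul_inv {x : G} (hx : 1 ≤ x) (u : G) : 1 ≤ u * x * u⁻¹ :=
  le_mul_inv_iff_mul_le.2 (by simpa using le_mul_of_one_le_right' (a := u) hx)

lemma one_le_inv_mul_mul {x : G} (hx : 1 ≤ x) (u : G) : 1 ≤ u⁻¹ * x * u := by
  rw [mul_assoc]
  exact le_inv_mul_iff_mul_le.2 (by simpa using le_mul_of_one_le_left' (a := u) hx)

end PoGroup

namespace Kite

variable {G : Type*} [Group G] [PartialOrder G] {I : Type*}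

-- `Kite` is a plain `def`, so a bare `Sum.inl f` has a `⊕` type that `simp` will not match
-- against `Kite G I`; these constructors and `cases` keep every term at type `Kite G I`.
def pos (f : I → {g : G // 1 ≤ g}) : Kite G I := Sum.inl f

def neg (a : I → {g : G // g ≤ 1}) : Kite G I := Sum.inr a

@[elab_as_elim]
def cases {motive : Kite G I → Sort*} (pos : ∀ f, motive (pos f))
    (neg : ∀ a, motive (neg a)) : ∀ x, motive x
  | Sum.inl f => pos f
  | Sum.inr a => neg a

def zero : Kite G I := pos fun _ => ⟨1, le_rfl⟩

def one : Kite G I := neg fun _ => ⟨1, le_rfl⟩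

lemma pos_ne_neg (f : I → {g : G // 1 ≤ g}) (a : I → {g : G // g ≤ 1}) : pos f ≠ neg a :=
  Sum.inl_ne_inr

lemma neg_ne_pos (a : I → {g : G // g ≤ 1}) (f : I → {g : G // 1 ≤ g}) : neg a ≠ pos f :=
  Sum.inr_ne_inl

lemma pos_inj {f g : I → {g : G // 1 ≤ g}} : pos f = pos g ↔ f = g := Sum.inl_injective.eq_iff

lemma neg_inj {a b : I → {g : G // g ≤ 1}} : neg a = neg b ↔ a = b := Sum.inr_injective.eq_iff

open Classical in
/-- The upper element with values `x`, if `x` lies in `(G⁻)^I`. -/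
noncomputable def neg? (x : I → G) : Option (Kite G I) :=
  if h : ∀ i, x i ≤ 1 then some (neg fun i => ⟨x i, h i⟩) else none

lemma neg?_eq_some_neg_iff {x : I → G} {a : I → {g : G // g ≤ 1}} :
    neg? x = some (neg a) ↔ ∀ i, x i = a i := by
  unfold neg?
  split_ifs with h
  · simp [neg_inj, funext_iff, Subtype.ext_iff]
  · exact iff_of_false (by simp) fun hx => h fun i => hx i ▸ (a i).2

lemma neg?_eq_some_iff {x : I → G} {s : Kite G I} :
    neg? x = some s ↔ ∃ hx : ∀ i, x i ≤ 1, s = neg fun i => ⟨x i, hx i⟩ := by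
  unfold neg?
  split_ifs with h <;> simp [h, eq_comm]

lemma isSome_neg?_iff {x : I → G} : (neg? x).isSome ↔ ∀ i, x i ≤ 1 := by
  unfold neg?
  split_ifs with h <;> simp [h]

lemma neg?_bind_of_neg {x : I → G} {F : Kite G I → Option (Kite G I)}
    (hF : ∀ a, F (neg a) = none) : (neg? x).bind F = none := by
  unfold neg?
  split_ifs
  exacts [hF _, rfl]

section Compl

variable [CovariantClass G G (· * ·) (· ≤ ·)] (l r : Equiv.Perm I)

def rightCompl : Kite G I → Kite G I :=
  Kite.cases (fun f => neg fun i => ⟨(f (l.symm i) : G)⁻¹, inv_le_one'.2 (f _).2⟩)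
    (fun a => pos fun j => ⟨(a (r j) : G)⁻¹, one_le_inv'.2 (a _).2⟩)

def leftCompl : Kite G I → Kite G I :=
  Kite.cases (fun f => neg fun i => ⟨(f (r.symm i) : G)⁻¹, inv_le_one'.2 (f _).2⟩)
    (fun a => pos fun j => ⟨(a (l j) : G)⁻¹, one_le_inv'.2 (a _).2⟩)

lemma rightCompl_pos (f : I → {g : G // 1 ≤ g}) :
    rightCompl l r (pos f) = neg fun i => ⟨(f (l.symm i) : G)⁻¹, inv_le_one'.2 (f _).2⟩ :=
  rfl

lemma rightCompl_neg (a : I → {g : G // g ≤ 1}) :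
    rightCompl l r (neg a) = pos fun j => ⟨(a (r j) : G)⁻¹, one_le_inv'.2 (a _).2⟩ := rfl

lemma leftCompl_pos (f : I → {g : G // 1 ≤ g}) :
    leftCompl l r (pos f) = neg fun i => ⟨(f (r.symm i) : G)⁻¹, inv_le_one'.2 (f _).2⟩ :=
  rfl

lemma leftCompl_neg (a : I → {g : G // g ≤ 1}) :
    leftCompl l r (neg a) = pos fun j => ⟨(a (l j) : G)⁻¹, one_le_inv'.2 (a _).2⟩ := rfl

end Compl

end Kite

open Kite

section KiteAdd

variable {G : Type*} [Group G] [PartialOrder G] [CovariantClass G G (· * ·) (· ≤ ·)]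
    [CovariantClass G G (Function.swap (· * ·)) (· ≤ ·)]
    {I : Type*} (l r : Equiv.Perm I)

lemma kiteAdd_pos_pos (f g : I → {g : G // 1 ≤ g}) :
    kiteAdd l r (pos f) (pos g) =
      some (pos fun j => ⟨(f j : G) * g j, one_le_mul (f j).2 (g j).2⟩) :=
  rfl

lemma kiteAdd_neg_neg (a b : I → {g : G // g ≤ 1}) : kiteAdd l r (neg a) (neg b) = none := rfl

lemma kiteAdd_neg_pos (a : I → {g : G // g ≤ 1}) (f : I → {g : G // 1 ≤ g}) :
    kiteAdd l r (neg a) (pos f) = neg? fun i => (a i : G) * f (r.symm i) := by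
  unfold kiteAdd neg?
  classical
  exact dite_congr (propext (forall_congr' fun i => le_inv_iff_mul_le_one_left)) (fun _ => rfl)
    (fun _ => rfl)

lemma kiteAdd_pos_neg (f : I → {g : G // 1 ≤ g}) (a : I → {g : G // g ≤ 1}) :
    kiteAdd l r (pos f) (neg a) = neg? fun i => (f (l.symm i) : G) * a i := by
  unfold kiteAdd neg?
  classical
  exact dite_congr (propext (forall_congr' fun i => le_inv_iff_mul_le_one_right)) (fun _ => rfl)
    (fun _ => rfl)

lemma neg?_bind_kiteAdd_pos (x : I → G) (k : I → {g : G // 1 ≤ g}) :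
    (neg? x).bind (fun y => kiteAdd l r y (pos k)) = neg? fun i => x i * k (r.symm i) := by
  by_cases hx : ∀ i, x i ≤ 1
  · rw [neg?, dif_pos hx]
    exact kiteAdd_neg_pos l r _ k
  · rw [neg?, dif_neg hx, Option.bind_none, neg?, dif_neg]
    exact fun hxk => hx fun i => (le_mul_of_one_le_right' (k _).2).trans (hxk i)

lemma neg?_bind_pos_kiteAdd (f : I → {g : G // 1 ≤ g}) (x : I → G) :
    (neg? x).bind (kiteAdd l r (pos f)) = neg? fun i => f (l.symm i) * x i := by
  by_cases hx : ∀ i, x i ≤ 1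
  · rw [neg?, dif_pos hx]
    exact kiteAdd_pos_neg l r f _
  · rw [neg?, dif_neg hx, Option.bind_none, neg?, dif_neg]
    exact fun hfx => hx fun i => (le_mul_of_one_le_left' (f _).2).trans (hfx i)

lemma neg?_bind_kiteAdd_neg (x : I → G) (c : I → {g : G // g ≤ 1}) :
    (neg? x).bind (fun y => kiteAdd l r y (neg c)) = none :=
  neg?_bind_of_neg fun _ => rfl

lemma neg?_bind_neg_kiteAdd (a : I → {g : G // g ≤ 1}) (x : I → G) :
    (neg? x).bind (kiteAdd l r (neg a)) = none :=
  neg?_bind_of_neg fun _ => rfl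

lemma kiteAdd_assoc (a b c : Kite G I) :
    (kiteAdd l r a b).bind (fun x => kiteAdd l r x c) =
      (kiteAdd l r b c).bind (fun x => kiteAdd l r a x) := by
  induction a using Kite.cases <;> induction b using Kite.cases <;>
    induction c using Kite.cases <;>
    simp only [kiteAdd_pos_pos, kiteAdd_neg_neg, kiteAdd_pos_neg, kiteAdd_neg_pos,
      Option.bind_some, Option.bind_none, neg?_bind_kiteAdd_pos, neg?_bind_pos_kiteAdd,
      neg?_bind_kiteAdd_neg, neg?_bind_neg_kiteAdd, mul_assoc]

lemma kiteAdd_eq_one_iff_eq_rightCompl (x d : Kite G I) :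
    kiteAdd l r x d = some one ↔ d = rightCompl l r x := by
  induction x using Kite.cases with
  | pos f =>
    induction d using Kite.cases with
    | pos g => simp [kiteAdd_pos_pos, one, rightCompl_pos, pos_ne_neg]
    | neg b =>
      simp [kiteAdd_pos_neg, one, neg?_eq_some_neg_iff, rightCompl_pos, Kite.neg_inj, funext_iff,
        Subtype.ext_iff, mul_eq_one_iff_eq_inv']
  | neg a =>
    induction d using Kite.cases with
    | pos g =>
      rw [kiteAdd_neg_pos, one, neg?_eq_some_neg_iff, rightCompl_neg, pos_inj, funext_iff,
        ← r.forall_congr_right]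
      simp [Subtype.ext_iff, mul_eq_one_iff_eq_inv']
    | neg b => simp [kiteAdd_neg_neg, rightCompl_neg, neg_ne_pos]

lemma kiteAdd_eq_one_iff_eq_leftCompl (x e : Kite G I) :
    kiteAdd l r e x = some one ↔ e = leftCompl l r x := by
  induction x using Kite.cases with
  | pos f =>
    induction e using Kite.cases with
    | pos g => simp [kiteAdd_pos_pos, one, leftCompl_pos, pos_ne_neg]
    | neg b =>
      simp [kiteAdd_neg_pos, one, neg?_eq_some_neg_iff, leftCompl_pos, Kite.neg_inj, funext_iff,
        Subtype.ext_iff, mul_eq_one_iff_eq_inv]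
  | neg a =>
    induction e using Kite.cases with
    | pos g =>
      rw [kiteAdd_pos_neg, one, neg?_eq_some_neg_iff, leftCompl_neg, pos_inj, funext_iff,
        ← l.forall_congr_right]
      simp [Subtype.ext_iff, mul_eq_one_iff_eq_inv]
    | neg b => simp [kiteAdd_neg_neg, leftCompl_neg, neg_ne_pos]

lemma exists_kiteAdd_eq_left {x y s : Kite G I} (h : kiteAdd l r x y = some s) :
    ∃ d, kiteAdd l r d x = some s := by
  induction x using Kite.cases with
  | pos f =>
    induction y using Kite.cases with
    | pos g =>
      rw [kiteAdd_pos_pos] at h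
      obtain rfl := Option.some_inj.1 h
      refine ⟨pos fun j => ⟨f j * g j * (f j : G)⁻¹, one_le_mul_mul_inv (g j).2 _⟩, ?_⟩
      simp [kiteAdd_pos_pos]
    | neg b =>
      rw [kiteAdd_pos_neg, neg?_eq_some_iff] at h
      obtain ⟨hfb, rfl⟩ := h
      refine ⟨neg fun i => ⟨f (l.symm i) * b i * (f (r.symm i) : G)⁻¹,
        mul_le_one' (hfb i) (inv_le_one'.2 (f _).2)⟩, ?_⟩
      simp [kiteAdd_neg_pos, neg?_eq_some_neg_iff]
  | neg a =>
    induction y using Kite.cases with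
    | pos g =>
      rw [kiteAdd_neg_pos, neg?_eq_some_iff] at h
      obtain ⟨-, rfl⟩ := h
      refine ⟨pos fun j => ⟨a (l j) * g (r.symm (l j)) * (a (l j) : G)⁻¹,
        one_le_mul_mul_inv (g _).2 _⟩, ?_⟩
      simp [kiteAdd_pos_neg, neg?_eq_some_neg_iff]
    | neg b => simp [kiteAdd_neg_neg] at h

lemma exists_kiteAdd_eq_right {x y s : Kite G I} (h : kiteAdd l r x y = some s) :
    ∃ e, kiteAdd l r y e = some s := by
  induction x using Kite.cases with
  | pos f =>
    induction y using Kite.cases with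
    | pos g =>
      rw [kiteAdd_pos_pos] at h
      obtain rfl := Option.some_inj.1 h
      refine ⟨pos fun j => ⟨(g j : G)⁻¹ * f j * g j, one_le_inv_mul_mul (f j).2 _⟩, ?_⟩
      simp [kiteAdd_pos_pos, mul_assoc]
    | neg b =>
      rw [kiteAdd_pos_neg, neg?_eq_some_iff] at h
      obtain ⟨-, rfl⟩ := h
      refine ⟨pos fun j => ⟨(b (r j) : G)⁻¹ * f (l.symm (r j)) * b (r j),
        one_le_inv_mul_mul (f _).2 _⟩, ?_⟩
      simp [kiteAdd_neg_pos, neg?_eq_some_neg_iff, mul_assoc]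
  | neg a =>
    induction y using Kite.cases with
    | pos g =>
      rw [kiteAdd_neg_pos, neg?_eq_some_iff] at h
      obtain ⟨hag, rfl⟩ := h
      refine ⟨neg fun i => ⟨(g (l.symm i) : G)⁻¹ * (a i * g (r.symm i)),
        mul_le_one' (inv_le_one'.2 (g _).2) (hag i)⟩, ?_⟩
      simp [kiteAdd_pos_neg, neg?_eq_some_neg_iff]
    | neg b => simp [kiteAdd_neg_neg] at h

lemma eq_zero_of_isSome_kiteAdd_one_left {x : Kite G I} (h : (kiteAdd l r one x).isSome) :
    x = zero := by
  induction x using Kite.cases with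
  | pos f =>
    rw [one, kiteAdd_neg_pos, isSome_neg?_iff] at h
    refine pos_inj.2 (funext fun j => Subtype.ext (le_antisymm ?_ (f j).2))
    simpa using h (r j)
  | neg b => simp [one, kiteAdd_neg_neg] at h

lemma eq_zero_of_isSome_kiteAdd_one_right {x : Kite G I} (h : (kiteAdd l r x one).isSome) :
    x = zero := by
  induction x using Kite.cases with
  | pos f =>
    rw [one, kiteAdd_pos_neg, isSome_neg?_iff] at h
    refine pos_inj.2 (funext fun j => Subtype.ext (le_antisymm ?_ (f j).2))
    simpa using h (l j)
  | neg b => simp [one, kiteAdd_neg_neg] at h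

end KiteAdd

/-- **Kite pseudo effect algebra.** For a po-group `G`, a set `I`, and bijections
`λ ρ : I → I`, the kite `(G⁺)^I ⊎ (G⁻)^I` with `0 = ⟨e⟩`, `1 = ⟨e⁻¹⟩` and the partial
addition given by rules (I)–(IV) is a pseudo effect algebra. -/
theorem stmt3 {G : Type*} [Group G] [PartialOrder G]
    [CovariantClass G G (· * ·) (· ≤ ·)]
    [CovariantClass G G (Function.swap (· * ·)) (· ≤ ·)]
    {I : Type*} (l r : Equiv.Perm I) :
    ∃ P : PseudoEffectAlgebra (Kite G I),
      P.add = kiteAdd l r ∧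
      P.zero = Sum.inl (fun _ => ⟨1, le_refl 1⟩) ∧
      P.one = Sum.inr (fun _ => ⟨1, le_refl 1⟩) := by
  refine ⟨{
    add := kiteAdd l r
    zero := Kite.zero
    one := Kite.one
    assoc := kiteAdd_assoc l r
    rcompl := fun x => ⟨rightCompl l r x, (kiteAdd_eq_one_iff_eq_rightCompl l r x _).2 rfl,
      fun _ => (kiteAdd_eq_one_iff_eq_rightCompl l r x _).1⟩
    lcompl := fun x => ⟨leftCompl l r x, (kiteAdd_eq_one_iff_eq_leftCompl l r x _).2 rfl,
      fun _ => (kiteAdd_eq_one_iff_eq_leftCompl l r x _).1⟩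
    exch := fun _ _ _ h => ⟨exists_kiteAdd_eq_left l r h, exists_kiteAdd_eq_right l r h⟩
    one_add := fun _ => eq_zero_of_isSome_kiteAdd_one_left l r
    add_one := fun _ => eq_zero_of_isSome_kiteAdd_one_right l r }, rfl, rfl, rfl⟩
end

section
/- For a po-group G with strong unit u > 0, the interval Γ(G,u) = {g ∈ G : 0 ≤ g ≤ u} with the restriction of the group addition (a + b defined iff a + b ∈ [0,u]), 0, and u is a pseudo effect algebra, in which a⁻ = u − a and a∼ = −a + u. -/
open Classical in
/-- The partial addition on the interval `Γ(G,u) = {g : 0 ≤ g ≤ u}` of a (not necessarily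
Abelian) po-group: `a + b` is defined iff `a + b ≤ u` (then automatically `0 ≤ a + b`). -/
noncomputable def gammaAdd {G : Type*} [AddGroup G] [PartialOrder G]
    [CovariantClass G G (· + ·) (· ≤ ·)]
    [CovariantClass G G (Function.swap (· + ·)) (· ≤ ·)] (u : G) :
    {g : G // 0 ≤ g ∧ g ≤ u} → {g : G // 0 ≤ g ∧ g ≤ u} → Option {g : G // 0 ≤ g ∧ g ≤ u} :=
  fun a b =>
    if h : a.1 + b.1 ≤ u then some ⟨a.1 + b.1, add_nonneg a.2.1 b.2.1, h⟩ else none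

/-! All computations happen in `G`: `a + b` is defined in `Γ(G,u)` exactly when `a + b ≤ u`.
Since every element is positive, `a + b ≤ a + b + c` and `b + c ≤ a + b + c`, so both sides of
associativity are defined iff `a + b + c ≤ u`. The complements of `a` are the solutions `u - a`
and `-a + u` of `x + a = u` and `a + x = u`, and for `a + b = s` the exchange elements are
`s - a` and `-b + s`. -/

section Interval

variable {G : Type*} [AddGroup G] [PartialOrder G] [AddLeftMono G] [AddRightMono G] {u : G}

local notation "Γ" => {g : G // 0 ≤ g ∧ g ≤ u}

lemma gammaAdd_eq_some_iff {a b c : Γ} : gammaAdd u a b = some c ↔ a.1 + b.1 = c.1 := by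
  unfold gammaAdd
  split_ifs with h
  · rw [Option.some_inj, Subtype.ext_iff]
  · simp only [false_iff]
    intro hc
    exact h (hc ▸ c.2.2)

lemma gammaAdd_isSome_iff {a b : Γ} : (gammaAdd u a b).isSome ↔ a.1 + b.1 ≤ u := by
  unfold gammaAdd
  split_ifs with h <;> simp [h]

lemma gammaAdd_bind_left_eq_some_iff {a b c s : Γ} :
    (gammaAdd u a b).bind (gammaAdd u · c) = some s ↔ a.1 + b.1 + c.1 = s.1 := by
  simp only [Option.bind_eq_some_iff, gammaAdd_eq_some_iff]
  refine ⟨fun ⟨x, hab, hxc⟩ ↦ hab ▸ hxc, fun h ↦ ?_⟩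
  have hab : a.1 + b.1 ≤ u := calc
    a.1 + b.1 ≤ a.1 + b.1 + c.1 := le_add_of_nonneg_right c.2.1
    _ ≤ u := h ▸ s.2.2
  exact ⟨⟨a.1 + b.1, add_nonneg a.2.1 b.2.1, hab⟩, rfl, h⟩

lemma gammaAdd_bind_right_eq_some_iff {a b c s : Γ} :
    (gammaAdd u b c).bind (gammaAdd u a ·) = some s ↔ a.1 + b.1 + c.1 = s.1 := by
  simp only [Option.bind_eq_some_iff, gammaAdd_eq_some_iff, add_assoc]
  refine ⟨fun ⟨x, hbc, hax⟩ ↦ hbc ▸ hax, fun h ↦ ?_⟩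
  have hbc : b.1 + c.1 ≤ u := calc
    b.1 + c.1 ≤ a.1 + (b.1 + c.1) := le_add_of_nonneg_left a.2.1
    _ ≤ u := h ▸ s.2.2
  exact ⟨⟨b.1 + c.1, add_nonneg b.2.1 c.2.1, hbc⟩, rfl, h⟩

lemma gammaAdd_assoc (a b c : Γ) :
    (gammaAdd u a b).bind (gammaAdd u · c) = (gammaAdd u b c).bind (gammaAdd u a ·) :=
  Option.ext fun _ ↦ gammaAdd_bind_left_eq_some_iff.trans gammaAdd_bind_right_eq_some_iff.symm

lemma gammaAdd_eq_some_top_iff_left {a b : Γ} {hu : 0 ≤ u ∧ u ≤ u} :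
    gammaAdd u b a = some ⟨u, hu⟩ ↔ b.1 = u - a.1 :=
  gammaAdd_eq_some_iff.trans eq_sub_iff_add_eq.symm

lemma gammaAdd_eq_some_top_iff_right {a b : Γ} {hu : 0 ≤ u ∧ u ≤ u} :
    gammaAdd u a b = some ⟨u, hu⟩ ↔ b.1 = -a.1 + u :=
  gammaAdd_eq_some_iff.trans eq_neg_add_iff_add_eq.symm

lemma sub_mem_gamma {a s : G} (ha : 0 ≤ a) (has : a ≤ s) (hs : s ≤ u) :
    0 ≤ s - a ∧ s - a ≤ u :=
  ⟨sub_nonneg.2 has, (sub_le_self s ha).trans hs⟩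

lemma neg_add_mem_gamma {a s : G} (ha : 0 ≤ a) (has : a ≤ s) (hs : s ≤ u) :
    0 ≤ -a + s ∧ -a + s ≤ u :=
  ⟨le_neg_add_iff_le.2 has, (neg_add_le_iff_le_add.2 (le_add_of_nonneg_left ha)).trans hs⟩

lemma gammaAdd_exch {a b s : Γ} (h : gammaAdd u a b = some s) :
    (∃ d, gammaAdd u d a = some s) ∧ ∃ e, gammaAdd u b e = some s := by
  rw [gammaAdd_eq_some_iff] at h
  have has : a.1 ≤ s.1 := h ▸ le_add_of_nonneg_right b.2.1
  have hbs : b.1 ≤ s.1 := h ▸ le_add_of_nonneg_left a.2.1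
  exact ⟨⟨⟨s.1 - a.1, sub_mem_gamma a.2.1 has s.2.2⟩,
      gammaAdd_eq_some_iff.2 (sub_add_cancel _ _)⟩,
    ⟨⟨-b.1 + s.1, neg_add_mem_gamma b.2.1 hbs s.2.2⟩,
      gammaAdd_eq_some_iff.2 (add_neg_cancel_left _ _)⟩⟩

variable (u) in
noncomputable def gammaPseudoEffectAlgebra (hu : 0 ≤ u) : PseudoEffectAlgebra Γ where
  add := gammaAdd u
  zero := ⟨0, le_rfl, hu⟩
  one := ⟨u, hu, le_rfl⟩
  assoc := gammaAdd_assoc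
  rcompl a := ⟨⟨-a.1 + u, neg_add_mem_gamma a.2.1 a.2.2 le_rfl⟩,
    gammaAdd_eq_some_top_iff_right.2 rfl,
    fun _ h ↦ Subtype.ext (gammaAdd_eq_some_top_iff_right.1 h)⟩
  lcompl a := ⟨⟨u - a.1, sub_mem_gamma a.2.1 a.2.2 le_rfl⟩,
    gammaAdd_eq_some_top_iff_left.2 rfl,
    fun _ h ↦ Subtype.ext (gammaAdd_eq_some_top_iff_left.1 h)⟩
  exch _ _ _ := gammaAdd_exch
  one_add a h :=
    Subtype.ext <| le_antisymm (add_le_iff_nonpos_right u |>.1 (gammaAdd_isSome_iff.1 h)) a.2.1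
  add_one a h :=
    Subtype.ext <| le_antisymm (add_le_iff_nonpos_left.1 (gammaAdd_isSome_iff.1 h)) a.2.1

end Interval

theorem stmt4_general {G : Type*} [AddGroup G] [PartialOrder G]
    [CovariantClass G G (· + ·) (· ≤ ·)]
    [CovariantClass G G (Function.swap (· + ·)) (· ≤ ·)]
    (u : G) (hu : 0 < u) :
    ∃ P : PseudoEffectAlgebra {g : G // 0 ≤ g ∧ g ≤ u},
      P.add = gammaAdd u ∧
      P.zero = ⟨0, le_refl 0, le_of_lt hu⟩ ∧
      P.one = ⟨u, le_of_lt hu, le_refl u⟩ ∧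
      -- `a⁻ = u - a` : the unique left complement of `a` is `u - a`
      (∀ a b : {g : G // 0 ≤ g ∧ g ≤ u}, P.add b a = some P.one ↔ (b : G) = u - (a : G)) ∧
      -- `a∼ = -a + u` : the unique right complement of `a` is `-a + u`
      (∀ a b : {g : G // 0 ≤ g ∧ g ≤ u}, P.add a b = some P.one ↔ (b : G) = -(a : G) + u) :=
  ⟨gammaPseudoEffectAlgebra u hu.le, rfl, rfl, rfl,
    fun _ _ ↦ gammaAdd_eq_some_top_iff_left, fun _ _ ↦ gammaAdd_eq_some_top_iff_right⟩

/-- For a po-group `G` with strong unit `u > 0`, `Γ(G,u) = ([0,u]; +, 0, u)` with the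
restricted addition is a pseudo effect algebra, in which `a⁻ = u − a` and `a∼ = −a + u`. -/
theorem stmt4 {G : Type*} [AddGroup G] [PartialOrder G]
    [CovariantClass G G (· + ·) (· ≤ ·)]
    [CovariantClass G G (Function.swap (· + ·)) (· ≤ ·)]
    (u : G) (hu : 0 < u) (hstrong : ∀ g : G, ∃ n : ℕ, 1 ≤ n ∧ g ≤ n • u) :
    ∃ P : PseudoEffectAlgebra {g : G // 0 ≤ g ∧ g ≤ u},
      P.add = gammaAdd u ∧
      P.zero = ⟨0, le_refl 0, le_of_lt hu⟩ ∧
      P.one = ⟨u, le_of_lt hu, le_refl u⟩ ∧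
      -- `a⁻ = u - a` : the unique left complement of `a` is `u - a`
      (∀ a b : {g : G // 0 ≤ g ∧ g ≤ u}, P.add b a = some P.one ↔ (b : G) = u - (a : G)) ∧
      -- `a∼ = -a + u` : the unique right complement of `a` is `-a + u`
      (∀ a b : {g : G // 0 ≤ g ∧ g ≤ u}, P.add a b = some P.one ↔ (b : G) = -(a : G) + u) :=
  stmt4_general u hu
end

section
/- Let G be a directed po-group satisfying RDP₁ and let P be an o-ideal of G. Then the quotient po-group G/P is directed and satisfies RDP₁. -/
section Aux

variable {G : Type*} [Group G] [PartialOrder G]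
    [CovariantClass G G (· * ·) (· ≤ ·)]
    [CovariantClass G G (Function.swap (· * ·)) (· ≤ ·)]
    (P : Subgroup G) [hN : P.Normal]

/-- well-definedness: the quotient relation evaluated on cosets of `a`, `b`. -/
lemma quot_le_iff (a b : G) :
    (∃ a' b' : G, (a' : G ⧸ P) = a ∧ (b' : G ⧸ P) = b ∧ ∃ h ∈ P, a' ≤ h * b')
      ↔ ∃ h ∈ P, a ≤ h * b := by
  constructor
  · rintro ⟨a', b', ha', hb', h, hP, hle⟩
    have hp : a'⁻¹ * a ∈ P := QuotientGroup.eq.mp ha'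
    have hq : b'⁻¹ * b ∈ P := QuotientGroup.eq.mp hb'
    refine ⟨h * (b * ((b'⁻¹ * b)⁻¹ * (a'⁻¹ * a)) * b⁻¹),
      P.mul_mem hP (hN.conj_mem _ (P.mul_mem (P.inv_mem hq) hp) b), ?_⟩
    have h1 : a' * (a'⁻¹ * a) ≤ h * b' * (a'⁻¹ * a) := mul_le_mul_left hle _
    have e1 : a' * (a'⁻¹ * a) = a := by group
    have e2 : h * b' * (a'⁻¹ * a) = h * (b * ((b'⁻¹ * b)⁻¹ * (a'⁻¹ * a)) * b⁻¹) * b := by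
      group
    rw [e1, e2] at h1
    exact h1
  · rintro ⟨h, hP, hle⟩
    exact ⟨a, b, rfl, rfl, h, hP, hle⟩

/-- a positive coset has a positive representative -/
lemma quot_pos_rep {x : G ⧸ P}
    (hx : ∃ a b : G, (a : G ⧸ P) = 1 ∧ (b : G ⧸ P) = x ∧ ∃ h ∈ P, a ≤ h * b) :
    ∃ a : G, 1 ≤ a ∧ (a : G ⧸ P) = x := by
  obtain ⟨a, b, ha, hb, h, hP, hle⟩ := hx
  have haP : a ∈ P := (QuotientGroup.eq_one_iff a).mp ha
  refine ⟨(h⁻¹ * a)⁻¹ * b, ?_, ?_⟩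
  · have : h⁻¹ * a ≤ h⁻¹ * (h * b) := mul_le_mul_right hle _
    have e : h⁻¹ * (h * b) = b := by group
    rw [e] at this
    calc (1 : G) = (h⁻¹ * a)⁻¹ * (h⁻¹ * a) := by group
      _ ≤ (h⁻¹ * a)⁻¹ * b := mul_le_mul_right this _
  · rw [← hb]
    refine QuotientGroup.eq.mpr ?_
    have : ((h⁻¹ * a)⁻¹ * b)⁻¹ * b = b⁻¹ * (h⁻¹ * a) * b := by group
    rw [this]
    simpa using hN.conj_mem _ (P.mul_mem (P.inv_mem hP) haP) b⁻¹

end Aux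

section Aux2

variable {G : Type*} [Group G] [PartialOrder G]
    [CovariantClass G G (· * ·) (· ≤ ·)]
    [CovariantClass G G (Function.swap (· * ·)) (· ≤ ·)]
    (P : Subgroup G) [hN : P.Normal]

set_option linter.unusedSectionVars false

/-- an element of the quotient between 1 and the coset of `c` has a representative
between `1` and `c`. -/
lemma quot_between_rep
    (hrdp : ∀ a₁ a₂ b₁ b₂ : G, 1 ≤ a₁ → 1 ≤ a₂ → 1 ≤ b₁ → 1 ≤ b₂ → a₁ * a₂ = b₁ * b₂ →
      ∃ c₁₁ c₁₂ c₂₁ c₂₂ : G, 1 ≤ c₁₁ ∧ 1 ≤ c₁₂ ∧ 1 ≤ c₂₁ ∧ 1 ≤ c₂₂ ∧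
        a₁ = c₁₁ * c₁₂ ∧ a₂ = c₂₁ * c₂₂ ∧ b₁ = c₁₁ * c₂₁ ∧ b₂ = c₁₂ * c₂₂ ∧
        ∀ x y : G, 1 ≤ x → x ≤ c₁₂ → 1 ≤ y → y ≤ c₂₁ → x * y = y * x)
    (hconv : ∀ g h v : G, g ∈ P → h ∈ P → g ≤ v → v ≤ h → v ∈ P)
    (hPdir : ∀ g₁ g₂, g₁ ∈ P → g₂ ∈ P → ∃ g ∈ P, g₁ ≤ g ∧ g₂ ≤ g)
    (c u : G) (hc : 1 ≤ c) (hu : 1 ≤ u) (h : G) (hhP : h ∈ P) (hle : u ≤ h * c) :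
    ∃ w : G, 1 ≤ w ∧ w ≤ c ∧ (w : G ⧸ P) = (u : G ⧸ P) := by
  obtain ⟨n, hnP, hhn, h1n⟩ := hPdir h 1 hhP P.one_mem
  have hunc : u ≤ n * c := hle.trans (mul_le_mul_left hhn c)
  have hpos : (1 : G) ≤ u⁻¹ * (n * c) := by
    have := mul_le_mul_right hunc u⁻¹
    simpa using this
  obtain ⟨d₁₁, d₁₂, d₂₁, d₂₂, h11, h12, h21, h22, ea1, ea2, eb1, eb2, _⟩ :=
    hrdp u (u⁻¹ * (n * c)) n c hu hpos (le_trans h1n (le_refl n)) hc (by group)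
  refine ⟨d₁₂, h12, ?_, ?_⟩
  · calc d₁₂ ≤ d₁₂ * d₂₂ := le_mul_of_one_le_right' h22
      _ = c := eb2.symm
  · have hd11P : d₁₁ ∈ P := by
      refine hconv 1 n d₁₁ P.one_mem hnP h11 ?_
      calc d₁₁ ≤ d₁₁ * d₂₁ := le_mul_of_one_le_right' h21
        _ = n := eb1.symm
    rw [ea1]
    refine (QuotientGroup.eq.mpr ?_).symm
    have : (d₁₁ * d₁₂)⁻¹ * d₁₂ = d₁₂⁻¹ * d₁₁⁻¹ * d₁₂ := by group
    rw [this]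
    simpa using hN.conj_mem _ (P.inv_mem hd11P) d₁₂⁻¹

end Aux2



/-- The Riesz decomposition property RDP₁ for a group `H` with a (partial-order)
relation `le`: every equality `a₁a₂ = b₁b₂` of products of positive elements has a
2×2 refinement `(cᵢⱼ)` of positive elements in which everything between `1` and `c₁₂`
commutes with everything between `1` and `c₂₁`. -/
def RDP1 {H : Type*} [Group H] (le : H → H → Prop) : Prop :=
  ∀ a₁ a₂ b₁ b₂ : H, le 1 a₁ → le 1 a₂ → le 1 b₁ → le 1 b₂ → a₁ * a₂ = b₁ * b₂ →
    ∃ c₁₁ c₁₂ c₂₁ c₂₂ : H, le 1 c₁₁ ∧ le 1 c₁₂ ∧ le 1 c₂₁ ∧ le 1 c₂₂ ∧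
      a₁ = c₁₁ * c₁₂ ∧ a₂ = c₂₁ * c₂₂ ∧ b₁ = c₁₁ * c₂₁ ∧ b₂ = c₁₂ * c₂₂ ∧
      ∀ x y : H, le 1 x → le x c₁₂ → le 1 y → le y c₂₁ → x * y = y * x

/-- Let `G` be a directed po-group with RDP₁ and `P` an o-ideal of `G` (a normal,
convex, directed subgroup).  Then the quotient po-group `G/P`, ordered by
`x/P ≤ y/P` iff `x ≤ h·y` for some `h ∈ P`, is a directed po-group with RDP₁. -/
theorem stmt5 {G : Type*} [Group G] [PartialOrder G]
    [CovariantClass G G (· * ·) (· ≤ ·)]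
    [CovariantClass G G (Function.swap (· * ·)) (· ≤ ·)]
    (hdir : ∀ g₁ g₂ : G, ∃ g, g₁ ≤ g ∧ g₂ ≤ g)
    (hrdp : RDP1 (fun a b : G => a ≤ b))
    (P : Subgroup G) [P.Normal]
    (hconv : ∀ g h v : G, g ∈ P → h ∈ P → g ≤ v → v ≤ h → v ∈ P)
    (hPdir : ∀ g₁ g₂, g₁ ∈ P → g₂ ∈ P → ∃ g ∈ P, g₁ ≤ g ∧ g₂ ≤ g) :
    -- the quotient relation on `G ⧸ P`
    (let le' : G ⧸ P → G ⧸ P → Prop :=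
      fun x y => ∃ a b : G, (a : G ⧸ P) = x ∧ (b : G ⧸ P) = y ∧ ∃ h ∈ P, a ≤ h * b
    -- `G/P` is a po-group:
    (∀ x, le' x x) ∧
    (∀ x y, le' x y → le' y x → x = y) ∧
    (∀ x y z, le' x y → le' y z → le' x z) ∧
    (∀ x y c d : G ⧸ P, le' x y → le' (c * x * d) (c * y * d)) ∧
    -- `G/P` is directed:
    (∀ x y : G ⧸ P, ∃ z, le' x z ∧ le' y z) ∧
    -- `G/P` satisfies RDP₁:
    RDP1 le') := by
  intro le'
  have hN : P.Normal := inferInstance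
  have hle' : ∀ a b : G, le' ↑a ↑b ↔ ∃ h ∈ P, a ≤ h * b := fun a b => quot_le_iff P a b
  refine ⟨?_, ?_, ?_, ?_, ?_, ?_⟩
  · -- reflexive
    intro x
    obtain ⟨a, rfl⟩ := QuotientGroup.mk_surjective x
    exact ⟨a, a, rfl, rfl, 1, P.one_mem, by simpa using le_refl a⟩
  · -- antisymmetric
    intro x y hxy hyx
    obtain ⟨a, rfl⟩ := QuotientGroup.mk_surjective x
    obtain ⟨b, rfl⟩ := QuotientGroup.mk_surjective y
    obtain ⟨h, hPh, h1⟩ := (hle' a b).mp hxy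
    obtain ⟨k, hPk, h2⟩ := (hle' b a).mp hyx
    have e1 : a * b⁻¹ ≤ h := by
      have := mul_le_mul_left h1 b⁻¹
      simpa [mul_assoc] using this
    have e2 : k⁻¹ ≤ a * b⁻¹ := by
      have h3 : b * a⁻¹ ≤ k := by
        have := mul_le_mul_left h2 a⁻¹
        simpa [mul_assoc] using this
      have := inv_le_inv_iff.mpr h3
      simpa [mul_inv_rev] using this
    have habP : a * b⁻¹ ∈ P := hconv k⁻¹ h _ (P.inv_mem hPk) hPh e2 e1
    refine QuotientGroup.eq.mpr ?_
    have : a⁻¹ * b = b⁻¹ * (a * b⁻¹)⁻¹ * b⁻¹⁻¹ := by group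
    rw [this]
    exact hN.conj_mem _ (P.inv_mem habP) b⁻¹
  · -- transitive
    intro x y z hxy hyz
    obtain ⟨a, rfl⟩ := QuotientGroup.mk_surjective x
    obtain ⟨b, rfl⟩ := QuotientGroup.mk_surjective y
    obtain ⟨c, rfl⟩ := QuotientGroup.mk_surjective z
    obtain ⟨h, hPh, h1⟩ := (hle' a b).mp hxy
    obtain ⟨k, hPk, h2⟩ := (hle' b c).mp hyz
    refine (hle' a c).mpr ⟨h * k, P.mul_mem hPh hPk, ?_⟩
    calc a ≤ h * b := h1
      _ ≤ h * (k * c) := mul_le_mul_right h2 h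
      _ = h * k * c := by group
  · -- compatible with multiplication
    intro x y c d hxy
    obtain ⟨a, rfl⟩ := QuotientGroup.mk_surjective x
    obtain ⟨b, rfl⟩ := QuotientGroup.mk_surjective y
    obtain ⟨u, rfl⟩ := QuotientGroup.mk_surjective c
    obtain ⟨v, rfl⟩ := QuotientGroup.mk_surjective d
    obtain ⟨h, hPh, h1⟩ := (hle' a b).mp hxy
    have goal : le' ↑(u * a * v) ↑(u * b * v) := by
      refine (hle' _ _).mpr ⟨u * h * u⁻¹, hN.conj_mem _ hPh u, ?_⟩
      have : u * a * v ≤ u * (h * b) * v := by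
        exact mul_le_mul_left (mul_le_mul_right h1 u) v
      calc u * a * v ≤ u * (h * b) * v := this
        _ = u * h * u⁻¹ * (u * b * v) := by group
    simpa [QuotientGroup.mk_mul] using goal
  · -- directed
    intro x y
    obtain ⟨a, rfl⟩ := QuotientGroup.mk_surjective x
    obtain ⟨b, rfl⟩ := QuotientGroup.mk_surjective y
    obtain ⟨g, hg1, hg2⟩ := hdir a b
    exact ⟨↑g, (hle' a g).mpr ⟨1, P.one_mem, by simpa using hg1⟩,
      (hle' b g).mpr ⟨1, P.one_mem, by simpa using hg2⟩⟩
  · -- RDP₁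
    intro X₁ X₂ Y₁ Y₂ hX₁ hX₂ hY₁ hY₂ heq
    obtain ⟨a₁, ha₁pos, ha₁⟩ := quot_pos_rep P hX₁
    obtain ⟨a₂, ha₂pos, ha₂⟩ := quot_pos_rep P hX₂
    obtain ⟨b₁, hb₁pos, hb₁⟩ := quot_pos_rep P hY₁
    obtain ⟨b₂, hb₂pos, hb₂⟩ := quot_pos_rep P hY₂
    have heq' : ((b₁ * b₂ : G) : G ⧸ P) = ((a₁ * a₂ : G) : G ⧸ P) := by
      rw [QuotientGroup.mk_mul, QuotientGroup.mk_mul, ha₁, ha₂, hb₁, hb₂, heq]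
    have hqP : (b₁ * b₂)⁻¹ * (a₁ * a₂) ∈ P := QuotientGroup.eq.mp heq'
    set q := (b₁ * b₂)⁻¹ * (a₁ * a₂) with hqdef
    obtain ⟨k, hkP, hqk, h1k⟩ := hPdir q⁻¹ 1 (P.inv_mem hqP) P.one_mem
    have ha₂k : (1 : G) ≤ a₂ * k := one_le_mul ha₂pos h1k
    have hqk1 : (1 : G) ≤ q * k := by
      have := mul_le_mul_right hqk q
      simpa using this
    have hb₂qk : (1 : G) ≤ b₂ * (q * k) := one_le_mul hb₂pos hqk1
    have heqG : a₁ * (a₂ * k) = b₁ * (b₂ * (q * k)) := by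
      rw [hqdef]; group
    obtain ⟨c₁₁, c₁₂, c₂₁, c₂₂, h11, h12, h21, h22, ea1, ea2, eb1, eb2, hcomm⟩ :=
      hrdp a₁ (a₂ * k) b₁ (b₂ * (q * k)) ha₁pos ha₂k hb₁pos hb₂qk heqG
    have pos : ∀ c : G, 1 ≤ c → le' 1 ↑c := fun c hc =>
      ⟨1, c, rfl, rfl, 1, P.one_mem, by simpa using hc⟩
    refine ⟨↑c₁₁, ↑c₁₂, ↑c₂₁, ↑c₂₂, pos _ h11, pos _ h12, pos _ h21, pos _ h22,
      ?_, ?_, ?_, ?_, ?_⟩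
    · rw [← ha₁, ea1, QuotientGroup.mk_mul]
    · have : ((a₂ : G) : G ⧸ P) = ((a₂ * k : G) : G ⧸ P) :=
        QuotientGroup.eq.mpr (by simpa using hkP)
      rw [← ha₂, this, ea2, QuotientGroup.mk_mul]
    · rw [← hb₁, eb1, QuotientGroup.mk_mul]
    · have : ((b₂ : G) : G ⧸ P) = ((b₂ * (q * k) : G) : G ⧸ P) :=
        QuotientGroup.eq.mpr (by simpa [mul_assoc] using P.mul_mem hqP hkP)
      rw [← hb₂, this, eb2, QuotientGroup.mk_mul]
    · -- commutation
      intro x y h1x hxc h1y hyc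
      obtain ⟨u, hu, hux⟩ := quot_pos_rep P h1x
      obtain ⟨v, hv, hvy⟩ := quot_pos_rep P h1y
      obtain ⟨h, hPh, hule⟩ := (hle' u c₁₂).mp (by rwa [hux])
      obtain ⟨h', hPh', hvle⟩ := (hle' v c₂₁).mp (by rwa [hvy])
      obtain ⟨w, hw1, hw2, hwu⟩ := quot_between_rep P hrdp hconv hPdir c₁₂ u h12 hu h hPh hule
      obtain ⟨z, hz1, hz2, hzv⟩ := quot_between_rep P hrdp hconv hPdir c₂₁ v h21 hv h' hPh' hvle
      have hcwz : w * z = z * w := hcomm w z hw1 hw2 hz1 hz2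
      calc x * y = ↑w * ↑z := by rw [hwu, hzv, hux, hvy]
        _ = ↑(w * z) := (QuotientGroup.mk_mul _ _ _).symm
        _ = ↑(z * w) := by rw [hcwz]
        _ = ↑z * ↑w := QuotientGroup.mk_mul _ _ _
        _ = y * x := by rw [hwu, hzv, hux, hvy]
end

section
/- Let I be a set, λ, ρ : I → I bijections, and let C be a connected component of I (an equivalence class of the connectedness relation). Then λ⁻¹(C) = ρ⁻¹(C), and consequently λ(ρ⁻¹(C)) = ρ(λ⁻¹(C)) = C. -/
/-- `i` and `j` are connected (w.r.t. bijections `l = λ` and `r = ρ` of `I`) if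
`(ρ∘λ⁻¹)^m(i) = j` or `(λ∘ρ⁻¹)^m(i) = j` for some integer `m ≥ 0`. -/
def Connected {I : Type*} (l r : Equiv.Perm I) (i j : I) : Prop :=
  ∃ m : ℕ, (fun x => r (l.symm x))^[m] i = j ∨ (fun x => l (r.symm x))^[m] i = j

/-- If `C` is a connected component of `I` (an equivalence class of the connectedness
relation), then `λ⁻¹(C) = ρ⁻¹(C)`, and consequently `λ(ρ⁻¹(C)) = ρ(λ⁻¹(C)) = C`. -/
theorem stmt8 {I : Type*} (l r : Equiv.Perm I) (C : Set I) (hne : C.Nonempty)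
    (hC : ∀ x ∈ C, ∀ y, Connected l r x y ↔ y ∈ C) :
    l.symm '' C = r.symm '' C ∧ l '' (r.symm '' C) = C ∧ r '' (l.symm '' C) = C := by
  have h1 : ∀ x ∈ C, r (l.symm x) ∈ C := fun x hx =>
    (hC x hx _).mp ⟨1, Or.inl rfl⟩
  have h2 : ∀ x ∈ C, l (r.symm x) ∈ C := fun x hx =>
    (hC x hx _).mp ⟨1, Or.inr rfl⟩
  have key : l.symm '' C = r.symm '' C := by
    ext z
    constructor
    · rintro ⟨x, hx, rfl⟩
      exact ⟨r (l.symm x), h1 x hx, by simp⟩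
    · rintro ⟨x, hx, rfl⟩
      exact ⟨l (r.symm x), h2 x hx, by simp⟩
  refine ⟨key, ?_, ?_⟩
  · rw [← key, Set.image_image]; simp
  · rw [key, Set.image_image]; simp
end

section
/- Let G be a po-group, I a set, λ, ρ : I → I bijections. On H = ℤ × G^I with lexicographic order (using coordinatewise order on G^I), define (m₁, x) * (m₂, y) := (m₁+m₂, i ↦ x_{λ^{-m₂}(i)} · y_{ρ^{-m₁}(i)}). Then (H, *, (0, constant e)) is a po-loop: * is a binary operation with identity element (0, e), for all a, b there exist unique elements x, y with a*x = b and y*a = b, and the lexicographic order is compatible with multiplication on both sides. -/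
/-- The kite loop multiplication on `W = ℤ × G^I`:
`(m₁, x) * (m₂, y) = (m₁+m₂, i ↦ x_{λ^{-m₂}(i)} · y_{ρ^{-m₁}(i)})`. -/
def kmul {G I : Type*} [Group G] (l r : Equiv.Perm I) :
    ℤ × (I → G) → ℤ × (I → G) → ℤ × (I → G) :=
  fun p q =>
    (p.1 + q.1, fun i => p.2 ((l ^ (-q.1) : Equiv.Perm I) i) * q.2 ((r ^ (-p.1) : Equiv.Perm I) i))

/-- The identity element `(0, constant e)` of the kite loop. -/
def kone (G I : Type*) [Group G] : ℤ × (I → G) := (0, fun _ => 1)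

/-- The lexicographic order on `W = ℤ × G^I` (coordinatewise order on `G^I`). -/
def wle {G I : Type*} [PartialOrder G] (a b : ℤ × (I → G)) : Prop :=
  a.1 < b.1 ∨ (a.1 = b.1 ∧ ∀ i, a.2 i ≤ b.2 i)

theorem perm_cancel {I : Type*} (p : Equiv.Perm I) (m : ℤ) (j : I) :
    (p ^ (-m)) ((p ^ m) j) = j := by
  rw [← Equiv.Perm.mul_apply, ← zpow_add, neg_add_cancel, zpow_zero, Equiv.Perm.one_apply]

theorem perm_cancel' {I : Type*} (p : Equiv.Perm I) (m : ℤ) (j : I) :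
    (p ^ m) ((p ^ (-m)) j) = j := by
  rw [← Equiv.Perm.mul_apply, ← zpow_add, add_neg_cancel, zpow_zero, Equiv.Perm.one_apply]

/-- `(ℤ × G^I, *, (0,e))` with the kite multiplication and the lexicographic order is a
po-loop: `(0,e)` is an identity, the equations `a*x = b` and `y*a = b` have unique
solutions, the lexicographic order is a partial order compatible with multiplication on
both sides. -/
theorem stmt12 {G I : Type*} [Group G] [PartialOrder G]
    [CovariantClass G G (· * ·) (· ≤ ·)]
    [CovariantClass G G (Function.swap (· * ·)) (· ≤ ·)]
    (l r : Equiv.Perm I) :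
    (∀ a : ℤ × (I → G), kmul l r a (kone G I) = a ∧ kmul l r (kone G I) a = a) ∧
    (∀ a b : ℤ × (I → G), ∃! x, kmul l r a x = b) ∧
    (∀ a b : ℤ × (I → G), ∃! y, kmul l r y a = b) ∧
    (∀ a : ℤ × (I → G), wle a a) ∧
    (∀ a b : ℤ × (I → G), wle a b → wle b a → a = b) ∧
    (∀ a b c : ℤ × (I → G), wle a b → wle b c → wle a c) ∧
    (∀ a b c : ℤ × (I → G), wle a b → wle (kmul l r c a) (kmul l r c b)) ∧
    (∀ a b c : ℤ × (I → G), wle a b → wle (kmul l r a c) (kmul l r b c)) := by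
  refine ⟨?_, ?_, ?_, ?_, ?_, ?_, ?_, ?_⟩
  · intro a
    constructor <;>
      simp [kmul, kone, Prod.ext_iff]
  · intro a b
    refine ⟨(b.1 - a.1, fun j =>
      (a.2 ((l ^ (a.1 - b.1) : Equiv.Perm I) ((r ^ a.1 : Equiv.Perm I) j)))⁻¹ *
        b.2 ((r ^ a.1 : Equiv.Perm I) j)), ?_, ?_⟩
    · simp only [kmul, Prod.ext_iff]
      refine ⟨by ring, funext fun i => ?_⟩
      rw [perm_cancel' r a.1 i]
      have : (a.1 - b.1) = -(b.1 - a.1) := by ring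
      rw [← this, mul_inv_cancel_left]
    · rintro x hx
      have h1 : a.1 + x.1 = b.1 := congrArg Prod.fst hx
      have hx1 : x.1 = b.1 - a.1 := by omega
      have h2 : ∀ i, a.2 ((l ^ (-x.1) : Equiv.Perm I) i) *
          x.2 ((r ^ (-a.1) : Equiv.Perm I) i) = b.2 i :=
        fun i => congrFun (congrArg Prod.snd hx) i
      refine Prod.ext hx1 (funext fun j => ?_)
      have := h2 ((r ^ a.1 : Equiv.Perm I) j)
      rw [perm_cancel r a.1 j] at this
      dsimp only
      rw [eq_inv_mul_iff_mul_eq, ← this, hx1]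
      congr 2
      ring_nf
  · intro a b
    refine ⟨(b.1 - a.1, fun j =>
      b.2 ((l ^ a.1 : Equiv.Perm I) j) *
        (a.2 ((r ^ (a.1 - b.1) : Equiv.Perm I) ((l ^ a.1 : Equiv.Perm I) j)))⁻¹), ?_, ?_⟩
    · simp only [kmul, Prod.ext_iff]
      refine ⟨by ring, funext fun i => ?_⟩
      rw [perm_cancel' l a.1 i]
      have : (a.1 - b.1) = -(b.1 - a.1) := by ring
      rw [← this, inv_mul_cancel_right]
    · rintro y hy
      have h1 : y.1 + a.1 = b.1 := congrArg Prod.fst hy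
      have hy1 : y.1 = b.1 - a.1 := by omega
      have h2 : ∀ i, y.2 ((l ^ (-a.1) : Equiv.Perm I) i) *
          a.2 ((r ^ (-y.1) : Equiv.Perm I) i) = b.2 i :=
        fun i => congrFun (congrArg Prod.snd hy) i
      refine Prod.ext hy1 (funext fun j => ?_)
      have := h2 ((l ^ a.1 : Equiv.Perm I) j)
      rw [perm_cancel l a.1 j] at this
      dsimp only
      rw [eq_mul_inv_iff_mul_eq, ← this, hy1]
      congr 3
      ring_nf
  · intro a; exact Or.inr ⟨rfl, fun i => le_rfl⟩
  · rintro a b (h | ⟨h1, h2⟩) (h' | ⟨h1', h2'⟩) <;> try omega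
    exact Prod.ext h1 (funext fun i => le_antisymm (h2 i) (h2' i))
  · rintro a b c (h | ⟨h1, h2⟩) (h' | ⟨h1', h2'⟩)
    · exact Or.inl (h.trans h')
    · exact Or.inl (h1' ▸ h)
    · exact Or.inl (h1 ▸ h')
    · exact Or.inr ⟨h1.trans h1', fun i => (h2 i).trans (h2' i)⟩
  · rintro a b c (h | ⟨h1, h2⟩)
    · exact Or.inl (by simpa [kmul] using by omega)
    · refine Or.inr ⟨by simp [kmul, h1], fun i => ?_⟩
      simp only [kmul, h1]
      exact mul_le_mul_right (h2 _) _
  · rintro a b c (h | ⟨h1, h2⟩)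
    · exact Or.inl (by simpa [kmul] using by omega)
    · refine Or.inr ⟨by simp [kmul, h1], fun i => ?_⟩
      simp only [kmul, h1]
      exact mul_le_mul_left (h2 _) _
end

section
/- The po-loop W = ℤ × G^I with multiplication (m₁,x)*(m₂,y) = (m₁+m₂, i ↦ x_{λ^{-m₂}(i)} y_{ρ^{-m₁}(i)}) is associative if λ ∘ ρ = ρ ∘ λ (assuming G nontrivial, associativity holds iff λ ∘ ρ = ρ ∘ λ), and in that case W is a po-group. -/
lemma key_comm {I : Type*} {l r : Equiv.Perm I} (h : ∀ i, l (r i) = r (l i))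
    (m n : ℤ) (i : I) :
    (l ^ m : Equiv.Perm I) ((r ^ n : Equiv.Perm I) i) =
      (r ^ n : Equiv.Perm I) ((l ^ m : Equiv.Perm I) i) := by
  have hc : Commute l r := Equiv.ext fun j => by
    simpa [Equiv.Perm.mul_apply] using h j
  have hz := hc.zpow_zpow m n
  have := Equiv.ext_iff.mp hz i
  simpa [Equiv.Perm.mul_apply] using this

lemma zpow_apply_add {I : Type*} (l : Equiv.Perm I) (m n : ℤ) (i : I) :
    (l ^ (m + n) : Equiv.Perm I) i = (l ^ m : Equiv.Perm I) ((l ^ n : Equiv.Perm I) i) := by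
  rw [zpow_add, Equiv.Perm.mul_apply]

/-- The kite po-loop `W = ℤ × G^I` is associative if `λ ∘ ρ = ρ ∘ λ`; for nontrivial
`G`, associativity holds iff `λ ∘ ρ = ρ ∘ λ`, and in that case `W` is a po-group
(every element is two-sided invertible). -/
theorem stmt14 {G I : Type*} [Group G] [PartialOrder G] [Nontrivial G]
    (l r : Equiv.Perm I) :
    ((∀ i, l (r i) = r (l i)) →
      ∀ a b c : ℤ × (I → G), kmul l r (kmul l r a b) c = kmul l r a (kmul l r b c)) ∧
    ((∀ a b c : ℤ × (I → G), kmul l r (kmul l r a b) c = kmul l r a (kmul l r b c)) ↔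
      ∀ i, l (r i) = r (l i)) ∧
    ((∀ i, l (r i) = r (l i)) →
      ∀ a : ℤ × (I → G), ∃ b, kmul l r a b = kone G I ∧ kmul l r b a = kone G I) := by
  classical
  have hassoc : (∀ i, l (r i) = r (l i)) →
      ∀ a b c : ℤ × (I → G), kmul l r (kmul l r a b) c = kmul l r a (kmul l r b c) := by
    intro h ⟨a1, x⟩ ⟨b1, y⟩ ⟨c1, z⟩
    simp only [kmul, Prod.mk.injEq]
    refine ⟨by ring, funext fun i => ?_⟩
    have h1 : (l ^ (-(b1 + c1)) : Equiv.Perm I) i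
        = (l ^ (-b1) : Equiv.Perm I) ((l ^ (-c1) : Equiv.Perm I) i) := by
      rw [neg_add, zpow_apply_add]
    have h2 : (r ^ (-(a1 + b1)) : Equiv.Perm I) i
        = (r ^ (-b1) : Equiv.Perm I) ((r ^ (-a1) : Equiv.Perm I) i) := by
      rw [neg_add, add_comm, zpow_apply_add]
    have h3 : (r ^ (-a1) : Equiv.Perm I) ((l ^ (-c1) : Equiv.Perm I) i)
        = (l ^ (-c1) : Equiv.Perm I) ((r ^ (-a1) : Equiv.Perm I) i) :=
      (key_comm h (-c1) (-a1) i).symm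
    rw [h1, h2, h3, mul_assoc]
  have hinv : (∀ i, l (r i) = r (l i)) →
      ∀ a : ℤ × (I → G), ∃ b, kmul l r a b = kone G I ∧ kmul l r b a = kone G I := by
    intro h ⟨m, x⟩
    refine ⟨(-m, fun j => (x ((l ^ m : Equiv.Perm I) ((r ^ m : Equiv.Perm I) j)))⁻¹), ?_, ?_⟩
    · simp only [kmul, kone, Prod.mk.injEq]
      refine ⟨by ring, funext fun i => ?_⟩
      have : (r ^ m : Equiv.Perm I) ((r ^ (-m) : Equiv.Perm I) i) = i := by
        rw [← zpow_apply_add]; simp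
      rw [neg_neg, this, mul_inv_cancel]
    · simp only [kmul, kone, Prod.mk.injEq]
      refine ⟨by ring, funext fun i => ?_⟩
      have h4 : (l ^ m : Equiv.Perm I) ((r ^ m : Equiv.Perm I) ((l ^ (-m) : Equiv.Perm I) i))
          = (r ^ m : Equiv.Perm I) i := by
        rw [key_comm h m m, ← zpow_apply_add]; simp
      rw [neg_neg, h4, inv_mul_cancel]
  refine ⟨hassoc, ⟨fun hA i => ?_, hassoc⟩, hinv⟩
  · obtain ⟨g, hg⟩ := exists_ne (1 : G)
    have := congrArg (fun p => p.2 i)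
      (hA (-1, fun _ => 1) (0, fun j => if j = r (l i) then g else 1) (-1, fun _ => 1))
    simp only [kmul] at this
    simp only [neg_zero, neg_neg, zpow_one, zpow_zero, Equiv.Perm.one_apply,
      one_mul, mul_one] at this
    -- this : (if r (l i) = r (l i) then g else 1) = (if l (r i) = r (l i) then g else 1)
    by_contra hne
    rw [if_neg hne] at this
    simp at this
    exact hg this
end

section
/- In the unital po-loop (W, u) where W = ℤ × G^I with the kite loop multiplication and u = (1, constant e), u is a strong unit: for every element g of W there is n ≥ 0 such that g ≤ u^n, where u^n is defined by u^1 = u and u^{n+1} = u^n * u. -/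
/-- Powers of the unit `u = (1, constant e)` in the kite po-loop:
`u^1 = u`, `u^{n+1} = u^n * u` (and `u^0` is the identity). -/
def upow {G I : Type*} [Group G] (l r : Equiv.Perm I) : ℕ → ℤ × (I → G)
  | 0 => kone G I
  | n + 1 => kmul l r (upow l r n) ((1 : ℤ), fun _ => (1 : G))

/-- In the unital po-loop `(W, u)`, `u = (1, constant e)` is a strong unit: every
`g ∈ W` satisfies `g ≤ u^n` for some integer `n ≥ 0`. -/
theorem stmt15 {G I : Type*} [Group G] [PartialOrder G] (l r : Equiv.Perm I)
    (g : ℤ × (I → G)) : ∃ n : ℕ, wle g (upow l r n) := by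
  have h : ∀ n : ℕ, upow l r n = ((n : ℤ), fun _ => (1 : G)) := by
    intro n
    induction n with
    | zero => rfl
    | succ k ih => simp [upow, ih, kmul]
  refine ⟨g.1.toNat + 1, Or.inl ?_⟩
  rw [h]
  push_cast
  omega
end

section
/- In the pseudo effect algebra Γ(W, u) with W = ℤ × G^I under the kite loop multiplication and u = (1, constant e), the complements are given by: (1, (aᵢ⁻¹))∼ = (0, (a_{ρ(i)})), (1, (aᵢ⁻¹))⁻ = (0, (a_{λ(i)})), (0, (fᵢ))∼ = (1, (f_{λ⁻¹(i)}⁻¹)), and (0, (fᵢ))⁻ = (1, (f_{ρ⁻¹(i)}⁻¹)). -/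
/-- Complements in the pseudo effect algebra `Γ(W, u)`, `W = ℤ × G^I` with the kite
loop multiplication, `u = (1, constant e)`:
`(1,(aᵢ⁻¹))∼ = (0,(a_{ρ(i)}))`, `(1,(aᵢ⁻¹))⁻ = (0,(a_{λ(i)}))`,
`(0,(fᵢ))∼ = (1,(f_{λ⁻¹(i)}⁻¹))`, `(0,(fᵢ))⁻ = (1,(f_{ρ⁻¹(i)}⁻¹))`,
where `x∼` is the unique solution of `x * x∼ = u` and `x⁻` of `x⁻ * x = u`. -/
theorem stmt16 {G I : Type*} [Group G] [PartialOrder G] (l r : Equiv.Perm I)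
    (a f : I → G) (ha : ∀ i, 1 ≤ a i) (hf : ∀ i, 1 ≤ f i) :
    -- (1,(aᵢ⁻¹))∼ = (0,(a_{ρ(i)}))
    kmul l r ((1 : ℤ), fun i => (a i)⁻¹) ((0 : ℤ), fun i => a (r i))
        = ((1 : ℤ), fun _ => (1 : G)) ∧
    -- (1,(aᵢ⁻¹))⁻ = (0,(a_{λ(i)}))
    kmul l r ((0 : ℤ), fun i => a (l i)) ((1 : ℤ), fun i => (a i)⁻¹)
        = ((1 : ℤ), fun _ => (1 : G)) ∧
    -- (0,(fᵢ))∼ = (1,(f_{λ⁻¹(i)}⁻¹))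
    kmul l r ((0 : ℤ), f) ((1 : ℤ), fun i => (f (l.symm i))⁻¹)
        = ((1 : ℤ), fun _ => (1 : G)) ∧
    -- (0,(fᵢ))⁻ = (1,(f_{ρ⁻¹(i)}⁻¹))
    kmul l r ((1 : ℤ), fun i => (f (r.symm i))⁻¹) ((0 : ℤ), f)
        = ((1 : ℤ), fun _ => (1 : G)) := by
  refine ⟨?_, ?_, ?_, ?_⟩ <;>
  · simp only [kmul, Prod.mk.injEq]
    refine ⟨by ring, funext fun i => ?_⟩
    simp [Equiv.Perm.inv_def]
end
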